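/- arXiv:2111.01852 — 2 statements merged into one kernel-verified Lean document; each statement's English description precedes it below -/
import Mathlib

section
/- Let H be a finite group, K ≤ Aut(H), and let G = H ⋊ K act on the set H, where H acts on itself by right multiplication and K acts by its automorphisms. Then a subset B of H containing the identity is a block of the action of G if and only if B is a K-invariant subgroup of H. -/
open MulAction

theorem Set.image_eq_of_eq_or_disjoint {α : Type*} {f : α → α} {B : Set α} {b : α}
    (hf : f '' B = B ∨ Disjoint (f '' B) B) (hb : b ∈ B) (hfb : f b ∈ B) : f '' B = B :=
  hf.resolve_right fun hd => Set.disjoint_left.mp hd (Set.mem_image_of_mem f hb) hfb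

section RightTranslates

variable {H : Type*} [Group H]

theorem exists_subgroup_coe_eq_of_rightTranslates {B : Set H} (h1 : (1 : H) ∈ B)
    (hB : ∀ h : H, (· * h) '' B = B ∨ Disjoint ((· * h) '' B) B) :
    ∃ L : Subgroup H, (L : Set H) = B := by
  refine ⟨Subgroup.ofDiv B ⟨1, h1⟩ fun a ha b hb => ?_, rfl⟩
  -- right translation by `b⁻¹` moves `b ∈ B` to `1 ∈ B`, so it fixes `B`
  have hfix := Set.image_eq_of_eq_or_disjoint (hB b⁻¹) hb (by simpa using h1)
  exact hfix.subset ⟨a, ha, rfl⟩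

theorem Subgroup.rightTranslate_eq_or_disjoint (L : Subgroup H) (h : H) :
    (· * h) '' (L : Set H) = L ∨ Disjoint ((· * h) '' (L : Set H)) L := by
  have hblock := (isBlock_iff_smul_eq_or_disjoint (G := Hᵐᵒᵖ)).mp
    (isBlock_subgroup' (s := L)) (MulOpposite.op h)
  simpa [← Set.image_smul] using hblock

theorem image_mulAut_eq_of_forall_mem {K : Subgroup (MulAut H)} {L : Subgroup H}
    (hL : ∀ σ ∈ K, ∀ x ∈ L, σ x ∈ L) {σ : MulAut H} (hσ : σ ∈ K) :
    σ '' (L : Set H) = L := by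
  refine Set.Subset.antisymm (Set.image_subset_iff.mpr fun x hx => hL σ hσ x hx) fun x hx => ?_
  exact ⟨σ⁻¹ x, hL σ⁻¹ (K.inv_mem hσ) x hx, by simp⟩

end RightTranslates

theorem stmt11_general {H : Type*} [Group H] (K : Subgroup (MulAut H))
    (B : Set H) (h1 : (1 : H) ∈ B) :
    (∀ σ ∈ K, ∀ h : H, (fun x => σ x * h) '' B = B ∨
        Disjoint ((fun x => σ x * h) '' B) B) ↔
      ∃ L : Subgroup H, (∀ σ ∈ K, ∀ x ∈ L, σ x ∈ L) ∧ B = (L : Set H) := by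
  constructor
  · intro hB
    obtain ⟨L, rfl⟩ := exists_subgroup_coe_eq_of_rightTranslates h1 (by simpa using hB 1 K.one_mem)
    refine ⟨L, fun σ hσ x hx => ?_, rfl⟩
    have hfix : σ '' (L : Set H) = L :=
      Set.image_eq_of_eq_or_disjoint (by simpa using hB σ hσ 1) L.one_mem (by simp)
    exact hfix.subset ⟨x, hx, rfl⟩
  · rintro ⟨L, hL, rfl⟩ σ hσ h
    have hcomp : (fun x => σ x * h) '' (L : Set H) = (· * h) '' (σ '' (L : Set H)) :=
      Set.image_comp (· * h) σ L
    rw [hcomp, image_mulAut_eq_of_forall_mem hL hσ]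
    exact L.rightTranslate_eq_or_disjoint h

/-- The translates of a subset of `H` under the action of the semidirect
product `G = H ⋊ K` (with `H` acting by right multiplication and `K ≤ Aut H`
by automorphisms) are exactly the images under maps `x ↦ σ x * h`.
A set is a block iff every such translate equals it or is disjoint from it. -/
theorem stmt11 {H : Type*} [Group H] [Finite H] (K : Subgroup (MulAut H))
    (B : Set H) (h1 : (1 : H) ∈ B) :
    (∀ σ ∈ K, ∀ h : H, (fun x => σ x * h) '' B = B ∨
        Disjoint ((fun x => σ x * h) '' B) B) ↔
      ∃ L : Subgroup H, (∀ σ ∈ K, ∀ x ∈ L, σ x ∈ L) ∧ B = (L : Set H) :=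
  stmt11_general K B h1
end

section
/- Let H be a nontrivial finite group, K a nontrivial finite group acting fixed-point-freely by automorphisms on H, and G = H ⋊ K. Then for every g ∈ G \ H, the entire coset gH is contained in the conjugacy class of g in G. -/
/-!
Write `G = H ⋊ K` and `k` for the `K`-component of `g`, so `k ≠ 1`. If `x⁻¹ a x = y⁻¹ a y` for
`x, y ∈ H` then `y x⁻¹` centralizes `a`; so whenever `a` has trivial centralizer in the finite normal
subgroup `H`, the map `x ↦ x⁻¹ a x` is injective from `H` into the coset `aH`, hence onto it. This
applies to `a = k`, whose centralizer in `H` is the fixed-point set of `k`. Both `g` and `g h`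
lie in `kH`, so both are conjugate to `k`.
-/

open SemidirectProduct

theorem Subgroup.isConj_mul_of_commute_imp_eq_one {G : Type*} [Group G] {N : Subgroup G}
    [N.Normal] [Finite N] {g : G} (hg : ∀ x ∈ N, Commute x g → x = 1) {n : G} (hn : n ∈ N) :
    IsConj g (g * n) := by
  let f : N → N := fun x =>
    ⟨g⁻¹ * x⁻¹ * g * x, N.mul_mem (by simpa using ‹N.Normal›.conj_mem _ (N.inv_mem x.2) g⁻¹) x.2⟩
  have hf : Function.Injective f := by
    intro x y hxy
    have hconj : (x : G)⁻¹ * g * x = (y : G)⁻¹ * g * y := by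
      simpa [f, mul_assoc] using congrArg (fun z : N => g * (z : G)) hxy
    have hcomm : Commute ((y : G) * (x : G)⁻¹) g := by
      calc (y : G) * (x : G)⁻¹ * g = y * ((x : G)⁻¹ * g * x) * (x : G)⁻¹ := by group
        _ = y * ((y : G)⁻¹ * g * y) * (x : G)⁻¹ := by rw [hconj]
        _ = g * (y * (x : G)⁻¹) := by group
    have hyx : (y : G) * (x : G)⁻¹ = 1 := hg _ (N.mul_mem y.2 (N.inv_mem x.2)) hcomm
    exact (Subtype.ext (mul_inv_eq_one.mp hyx)).symm
  obtain ⟨x, hx⟩ := Finite.injective_iff_surjective.mp hf ⟨n, hn⟩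
  refine isConj_iff.mpr ⟨(x : G)⁻¹, ?_⟩
  calc (x : G)⁻¹ * g * (x : G)⁻¹⁻¹ = g * (g⁻¹ * (x : G)⁻¹ * g * x) := by group
    _ = g * n := congrArg (g * ·) (congrArg Subtype.val hx)

namespace SemidirectProduct

variable {N G : Type*} [Group N] [Group G] {φ : G →* MulAut N}

theorem inl_commute_inr_iff {n : N} {g : G} :
    Commute (inl n : N ⋊[φ] G) (inr g) ↔ φ g n = n := by
  simp [Commute, SemiconjBy, SemidirectProduct.ext_iff, eq_comm]

instance [Finite N] : Finite (rightHom : N ⋊[φ] G →* G).ker := by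
  rw [← range_inl_eq_ker_rightHom]
  exact Finite.of_surjective _ inl.rangeRestrict_surjective

theorem eq_one_of_mem_ker_rightHom_of_commute_inr {g : G} (hg : ∀ n, φ g n = n → n = 1) :
    ∀ x ∈ (rightHom : N ⋊[φ] G →* G).ker, Commute x (inr g) → x = 1 := by
  rw [← range_inl_eq_ker_rightHom]
  rintro _ ⟨n, rfl⟩ hcomm
  rw [hg n (inl_commute_inr_iff.mp hcomm), map_one]

end SemidirectProduct

theorem stmt13_general {H K : Type*} [Group H] [Finite H]
    [Group K] [MulDistribMulAction K H]
    (hfpf : ∀ k : K, k ≠ 1 → ∀ h : H, k • h = h → h = 1)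
    (g : SemidirectProduct H K (MulDistribMulAction.toMulAut K H))
    (hg : g ∉ (SemidirectProduct.inl.range :
      Subgroup (SemidirectProduct H K (MulDistribMulAction.toMulAut K H)))) :
    ∀ h : H, IsConj g (g * SemidirectProduct.inl h) := by
  intro h
  rw [range_inl_eq_ker_rightHom] at hg
  have hcent := eq_one_of_mem_ker_rightHom_of_commute_inr
    (φ := MulDistribMulAction.toMulAut K H) (hfpf g.right hg)
  have hmem : (inr g.right)⁻¹ * g ∈ rightHom.ker := by simp
  have hconj_g := Subgroup.isConj_mul_of_commute_imp_eq_one hcent hmem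
  have hconj_gh := Subgroup.isConj_mul_of_commute_imp_eq_one hcent
    (Subgroup.mul_mem _ hmem (by simp : inl h ∈ rightHom.ker))
  rw [mul_inv_cancel_left] at hconj_g
  rw [← mul_assoc, mul_inv_cancel_left] at hconj_gh
  exact hconj_g.symm.trans hconj_gh

theorem stmt13 {H K : Type*} [Group H] [Finite H] [Nontrivial H]
    [Group K] [Finite K] [Nontrivial K] [MulDistribMulAction K H]
    (hfpf : ∀ k : K, k ≠ 1 → ∀ h : H, k • h = h → h = 1)
    (g : SemidirectProduct H K (MulDistribMulAction.toMulAut K H))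
    (hg : g ∉ (SemidirectProduct.inl.range :
      Subgroup (SemidirectProduct H K (MulDistribMulAction.toMulAut K H)))) :
    ∀ h : H, IsConj g (g * SemidirectProduct.inl h) :=
  stmt13_general hfpf g hg
end
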